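/- Let (Y, τ') be a subspace of a topological space (X, τ) with Y both open and closed in X. Then (Y, τ') is WS-supernormal in X if and only if (Y, τ') is strongly normal in X. -/

import Mathlib

/-- `Y` is WS-supernormal in `X`. -/
def WSSupernormalIn {X : Type*} (t : TopologicalSpace X) (Y : Set X) : Prop :=
  ∀ A B : Set X, A ⊆ Y →
    @IsClosed _ (TopologicalSpace.induced (Subtype.val : Y → X) t)
      ((Subtype.val : Y → X) ⁻¹' A) →
    @IsClosed X t B → A ∩ B = ∅ →
    ∃ U V : Set X, U ⊆ Y ∧
      @IsOpen _ (TopologicalSpace.induced (Subtype.val : Y → X) t)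
        ((Subtype.val : Y → X) ⁻¹' U) ∧
      @IsOpen X t V ∧ A ⊆ U ∧ B ⊆ V ∧ U ∩ V = ∅

/-- `Y` is strongly normal in `X`. -/
def StronglyNormalIn {X : Type*} (t : TopologicalSpace X) (Y : Set X) : Prop :=
  ∀ A B : Set X, A ⊆ Y → B ⊆ Y →
    @IsClosed _ (TopologicalSpace.induced (Subtype.val : Y → X) t)
      ((Subtype.val : Y → X) ⁻¹' A) →
    @IsClosed _ (TopologicalSpace.induced (Subtype.val : Y → X) t)
      ((Subtype.val : Y → X) ⁻¹' B) →
    A ∩ B = ∅ →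
    ∃ U V : Set X, @IsOpen X t U ∧ @IsOpen X t V ∧ A ⊆ U ∧ B ⊆ V ∧ U ∩ V = ∅

open Set

section

variable {X : Type*} [TopologicalSpace X] {Y A : Set X}

theorem IsClosed.isClosed_of_isClosed_preimage_val (hY : IsClosed Y) (hA : A ⊆ Y)
    (h : IsClosed ((↑) ⁻¹' A : Set Y)) : IsClosed A := by
  simpa [inter_eq_right.2 hA] using hY.isClosedMap_subtype_val _ h

theorem IsOpen.isOpen_of_isOpen_preimage_val (hY : IsOpen Y) (hA : A ⊆ Y)
    (h : IsOpen ((↑) ⁻¹' A : Set Y)) : IsOpen A := by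
  simpa [inter_eq_right.2 hA] using hY.isOpenMap_subtype_val _ h

end

theorem WSSupernormalIn.stronglyNormalIn {X : Type*} {t : TopologicalSpace X} {Y : Set X}
    (hopen : @IsOpen X t Y) (hclosed : @IsClosed X t Y) (hws : WSSupernormalIn t Y) :
    StronglyNormalIn t Y := by
  let _ := t
  intro A B hA hB hAc hBc hAB
  obtain ⟨U, V, hUY, hUo, hVo, hAU, hBV, hUV⟩ :=
    hws A B hA hAc (hclosed.isClosed_of_isClosed_preimage_val hB hBc) hAB
  exact ⟨U, V, hopen.isOpen_of_isOpen_preimage_val hUY hUo, hVo, hAU, hBV, hUV⟩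

/-- Separate `A` from the trace `B ∩ Y`, then enlarge the neighbourhood of `B` by the open set
`Yᶜ`, which misses `A`'s neighbourhood once that is cut down to `Y`. -/
theorem StronglyNormalIn.wsSupernormalIn {X : Type*} {t : TopologicalSpace X} {Y : Set X}
    (hclosed : @IsClosed X t Y) (hsn : StronglyNormalIn t Y) : WSSupernormalIn t Y := by
  let _ := t
  intro A B hA hAc hBc hAB
  have hBYc : IsClosed ((↑) ⁻¹' (B ∩ Y) : Set Y) := by
    rw [Subtype.preimage_coe_inter_self]
    exact hBc.preimage continuous_subtype_val
  obtain ⟨U, V, hUo, hVo, hAU, hBV, hUV⟩ :=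
    hsn A (B ∩ Y) hA inter_subset_right hAc hBYc (by rw [← inter_assoc, hAB, empty_inter])
  refine ⟨U ∩ Y, V ∪ Yᶜ, inter_subset_right, ?_, hVo.union hclosed.isOpen_compl,
    subset_inter hAU hA, fun x hx => ?_, ?_⟩
  · rw [Subtype.preimage_coe_inter_self]
    exact hUo.preimage continuous_subtype_val
  · by_cases hxY : x ∈ Y
    exacts [Or.inl (hBV ⟨hx, hxY⟩), Or.inr hxY]
  · rw [inter_union_distrib_left, inter_right_comm, hUV, empty_inter, inter_assoc,
      inter_compl_self, inter_empty, union_empty]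

theorem stmt7 {X : Type*} (t : TopologicalSpace X) (Y : Set X)
    (hopen : @IsOpen X t Y) (hclosed : @IsClosed X t Y) :
    WSSupernormalIn t Y ↔ StronglyNormalIn t Y :=
  ⟨WSSupernormalIn.stronglyNormalIn hopen hclosed, StronglyNormalIn.wsSupernormalIn hclosed⟩
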